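/- arXiv:gr-qc/0512066 — 2 statements merged into one kernel-verified Lean document; each statement's English description precedes it below -/
import Mathlib

section
/- The property of being totally umbilic is conformally invariant: if a submanifold M̃ of a semi-Riemannian manifold (M,g) is totally umbilic with respect to g, then for every smooth positive function Ω on M, M̃ is also totally umbilic with respect to the conformally rescaled metric Ω·g. -/
open Set

variable {E : Type*} [NormedAddCommGroup E] [NormedSpace ℝ E] [FiniteDimensional ℝ E]

/-- The tangent space at `p` of a subset `S` of the ambient space: the span of the
velocities at `p` of smooth curves through `p` that run inside `S`. -/
def TangentAt (S : Set E) (p : E) : Submodule ℝ E :=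
  Submodule.span ℝ {v : E | ∃ c : ℝ → E, ∃ ε : ℝ, 0 < ε ∧ (∀ t ∈ Ioo (-ε) ε, c t ∈ S) ∧
    c 0 = p ∧ ContDiffOn ℝ (⊤ : ℕ∞) c (Ioo (-ε) ε) ∧ deriv c 0 = v}

/-- `S` is, near `p`, a `k`-dimensional smooth (immersed, in fact embedded near `p`)
submanifold: it is locally the image of a smooth injective immersion defined on an open
subset of `ℝᵏ`. -/
def IsSubmanifoldPt (k : ℕ) (S : Set E) (p : E) : Prop :=
  ∃ (φ : (Fin k → ℝ) → E) (U : Set (Fin k → ℝ)) (V : Set E),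
    IsOpen U ∧ (0 : Fin k → ℝ) ∈ U ∧ φ 0 = p ∧ ContDiffOn ℝ (⊤ : ℕ∞) φ U ∧
    (∀ x ∈ U, Function.Injective (fderiv ℝ φ x)) ∧ Set.InjOn φ U ∧
    IsOpen V ∧ p ∈ V ∧ φ '' U = S ∩ V

/-- `S` is a `k`-dimensional smooth submanifold of the ambient space. -/
def IsSubmanifold (k : ℕ) (S : Set E) : Prop := ∀ p ∈ S, IsSubmanifoldPt k S p

/-- A (semi-Riemannian) metric on the open set `O`: a smooth field of symmetric
non-degenerate bilinear forms. -/
structure IsMetricOn (g : E → E →ₗ[ℝ] E →ₗ[ℝ] ℝ) (O : Set E) : Prop where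
  smooth : ∀ v w : E, ContDiffOn ℝ (⊤ : ℕ∞) (fun p => g p v w) O
  symm : ∀ p ∈ O, ∀ v w : E, g p v w = g p w v
  nondeg : ∀ p ∈ O, ∀ v : E, (∀ w : E, g p v w = 0) → v = 0

/-- `Γ` gives the Christoffel symbols of the Levi-Civita connection of `g` on `O`:
the unique torsion-free connection compatible with the metric `g`. -/
structure IsLeviCivitaOn (g : E → E →ₗ[ℝ] E →ₗ[ℝ] ℝ)
    (Γ : E → E →ₗ[ℝ] E →ₗ[ℝ] E) (O : Set E) : Prop where
  metric : IsMetricOn g O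
  smooth : ∀ v w : E, ContDiffOn ℝ (⊤ : ℕ∞) (fun p => Γ p v w) O
  torsionFree : ∀ p ∈ O, ∀ v w : E, Γ p v w = Γ p w v
  compatible : ∀ p ∈ O, ∀ v w z : E,
    fderiv ℝ (fun q => g q v w) p z = g p (Γ p z v) w + g p v (Γ p z w)

/-- The covariant derivative `∇_X Y` of the connection with Christoffel symbols `Γ`. -/
noncomputable def cov (Γ : E → E →ₗ[ℝ] E →ₗ[ℝ] E) (X Y : E → E) : E → E :=
  fun p => fderiv ℝ Y p (X p) + Γ p (X p) (Y p)

/-- A smooth vector field on `O` that is tangent to `S` along `S`. -/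
def IsTangentField (O S : Set E) (X : E → E) : Prop :=
  ContDiffOn ℝ (⊤ : ℕ∞) X O ∧ ∀ p ∈ S, X p ∈ TangentAt S p

/-- `S` is totally umbilic: there is a vector field `N` along `S` such that the second
fundamental form `Π(X,Y) = [∇_X Y]`, with values in the quotient `T_pM / T_pS`,
satisfies `Π(X,Y) = [g(X,Y)·N]`; equivalently `∇_X Y − g(X,Y)·N` is tangent to `S`. -/
def TotallyUmbilicOn (g : E → E →ₗ[ℝ] E →ₗ[ℝ] ℝ) (Γ : E → E →ₗ[ℝ] E →ₗ[ℝ] E)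
    (O S : Set E) : Prop :=
  ∃ N : E → E, ContDiffOn ℝ (⊤ : ℕ∞) N S ∧
    ∀ X Y : E → E, IsTangentField O S X → IsTangentField O S Y →
      ∀ p ∈ S, cov Γ X Y p - g p (X p) (Y p) • N p ∈ TangentAt S p

/-- `S` is totally geodesic: totally umbilic with `[N] = [0]`, i.e. the umbilic
vector field `N` can be chosen tangent to `S`. -/
def TotallyGeodesicOn (g : E → E →ₗ[ℝ] E →ₗ[ℝ] ℝ) (Γ : E → E →ₗ[ℝ] E →ₗ[ℝ] E)
    (O S : Set E) : Prop :=
  ∃ N : E → E, ContDiffOn ℝ (⊤ : ℕ∞) N S ∧ (∀ p ∈ S, N p ∈ TangentAt S p) ∧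
    ∀ X Y : E → E, IsTangentField O S X → IsTangentField O S Y →
      ∀ p ∈ S, cov Γ X Y p - g p (X p) (Y p) • N p ∈ TangentAt S p

/-- `c` is a geodesic of the connection `Γ` on the parameter set `J`. -/
def IsGeodesicOn (Γ : E → E →ₗ[ℝ] E →ₗ[ℝ] E) (c : ℝ → E) (J : Set ℝ) : Prop :=
  ContDiffOn ℝ (⊤ : ℕ∞) c J ∧
    ∀ t ∈ J, deriv (deriv c) t + Γ (c t) (deriv c t) (deriv c t) = 0

/-- The metric `g` has Lorentzian signature `(+,…,+,−)` on `O`. -/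
def IsLorentzianOn (g : E → E →ₗ[ℝ] E →ₗ[ℝ] ℝ) (O : Set E) : Prop :=
  ∀ p ∈ O, ∃ b : Module.Basis (Fin (Module.finrank ℝ E)) ℝ E, ∀ i j,
    g p (b i) (b j) =
      if i = j then (if (i : ℕ) + 1 = Module.finrank ℝ E then -1 else 1) else 0

/-- The tensor field induced by `g` on `S` is non-degenerate. -/
def InducedNondeg (g : E → E →ₗ[ℝ] E →ₗ[ℝ] ℝ) (S : Set E) : Prop :=
  ∀ p ∈ S, ∀ v ∈ TangentAt S p, (∀ w ∈ TangentAt S p, g p v w = 0) → v = 0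

/-- The tensor field induced by `g` on `S` is degenerate (has a nontrivial kernel)
at every point; for `g` Lorentzian this says that `S` is lightlike. -/
def InducedDegenerate (g : E → E →ₗ[ℝ] E →ₗ[ℝ] ℝ) (S : Set E) : Prop :=
  ∀ p ∈ S, ∃ v ∈ TangentAt S p, v ≠ 0 ∧ ∀ w ∈ TangentAt S p, g p v w = 0

theorem exists_smooth_gradient (g : E → E →ₗ[ℝ] E →ₗ[ℝ] ℝ) (O : Set E)
    (hO : IsOpen O) (hm : IsMetricOn g O) (Ω : E → ℝ) (hΩs : ContDiffOn ℝ (⊤ : ℕ∞) Ω O) :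
    ∃ G : E → E, ContDiffOn ℝ (⊤ : ℕ∞) G O ∧ ∀ p ∈ O, ∀ w, g p (G p) w = fderiv ℝ Ω p w := by
  classical
  set n := Module.finrank ℝ E with hn
  set b : Module.Basis (Fin n) ℝ E := Module.finBasis ℝ E with hb
  set A : E → E →L[ℝ] E := fun p => ∑ i, ∑ j, g p (b i) (b j) •
    (LinearMap.toContinuousLinearMap (b.coord i)).smulRight (b j) with hA
  have A_apply : ∀ p v, A p v = ∑ j, g p v (b j) • b j := by
    intro p v
    have hv : ∀ j, g p v (b j) = ∑ i, b.repr v i * g p (b i) (b j) := by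
      intro j
      conv_lhs => rw [← b.sum_repr v]
      simp [map_sum, -Module.Basis.sum_repr]
    simp only [hA, ContinuousLinearMap.sum_apply, ContinuousLinearMap.smul_apply,
      ContinuousLinearMap.smulRight_apply, LinearMap.coe_toContinuousLinearMap',
      Module.Basis.coord_apply]
    rw [Finset.sum_comm]
    refine Finset.sum_congr rfl fun j _ => ?_
    rw [hv j, Finset.sum_smul]
    refine Finset.sum_congr rfl fun i _ => ?_
    rw [smul_smul, mul_comm]
  have A_smooth : ContDiffOn ℝ (⊤ : ℕ∞) A O := by
    refine ContDiffOn.sum fun i _ => ContDiffOn.sum fun j _ => ?_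
    exact (hm.smooth (b i) (b j)).smul contDiffOn_const
  have A_unit : ∀ p ∈ O, IsUnit (A p) := by
    intro p hp
    have hinj : Function.Injective (A p) := by
      have : LinearMap.ker (A p : E →ₗ[ℝ] E) = ⊥ := by
        rw [LinearMap.ker_eq_bot']
        intro v hv
        have hv' : ∑ j, g p v (b j) • b j = 0 := by
          rw [← A_apply p v]; exact hv
        have hc : ∀ j, g p v (b j) = 0 := by
          intro j
          calc g p v (b j) = b.repr (∑ j, g p v (b j) • b j) j := by
                rw [b.repr_sum_self]
            _ = b.repr (0 : E) j := by rw [hv']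
            _ = 0 := by simp
        have : g p v = 0 := b.ext fun j => by simp [hc j]
        exact hm.nondeg p hp v fun w => by rw [this]; rfl
      exact LinearMap.ker_eq_bot.mp this
    have hsurj : Function.Surjective (A p) :=
      LinearMap.injective_iff_surjective.mp hinj
    let e := LinearEquiv.ofBijective ((A p : E →ₗ[ℝ] E)) ⟨hinj, hsurj⟩
    refine isUnit_iff_exists.2 ⟨LinearMap.toContinuousLinearMap (e.symm : E →ₗ[ℝ] E), ?_, ?_⟩
    · ext x
      show A p (e.symm x) = x
      exact e.apply_symm_apply x
    · ext x
      show e.symm (A p x) = x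
      exact e.symm_apply_apply x
  set V : E → E := fun p => ∑ j, fderiv ℝ Ω p (b j) • b j with hV
  have hdΩ : ContDiffOn ℝ (⊤ : ℕ∞) (fderiv ℝ Ω) O := hΩs.fderiv_of_isOpen hO (by simp)
  have V_smooth : ContDiffOn ℝ (⊤ : ℕ∞) V O := by
    refine ContDiffOn.sum fun j _ => ?_
    exact (hdΩ.clm_apply contDiffOn_const).smul contDiffOn_const
  have inv_smooth : ContDiffOn ℝ (⊤ : ℕ∞) (fun p => Ring.inverse (A p)) O := by
    intro p hp
    obtain ⟨u, hu⟩ := A_unit p hp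
    have hA' : ContDiffAt ℝ (⊤ : ℕ∞) A p := (A_smooth p hp).contDiffAt (hO.mem_nhds hp)
    have hinv : ContDiffAt ℝ (⊤ : ℕ∞) (Ring.inverse : (E →L[ℝ] E) → E →L[ℝ] E) (A p) :=
      hu ▸ contDiffAt_ringInverse ℝ u
    exact (hinv.comp p hA').contDiffWithinAt
  refine ⟨fun p => Ring.inverse (A p) (V p), inv_smooth.clm_apply V_smooth, ?_⟩
  intro p hp w
  have hAG : A p (Ring.inverse (A p) (V p)) = V p := by
    have h1 : A p * Ring.inverse (A p) = 1 := Ring.mul_inverse_cancel _ (A_unit p hp)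
    calc A p (Ring.inverse (A p) (V p)) = (A p * Ring.inverse (A p)) (V p) := rfl
      _ = V p := by rw [h1]; rfl
  set Gp := Ring.inverse (A p) (V p)
  have hcoeff : ∀ j, g p Gp (b j) = fderiv ℝ Ω p (b j) := by
    intro j
    have h2 : ∑ j, g p Gp (b j) • b j = ∑ j, fderiv ℝ Ω p (b j) • b j := by
      rw [← A_apply p Gp]; exact hAG
    calc g p Gp (b j) = b.repr (∑ j, g p Gp (b j) • b j) j := by rw [b.repr_sum_self]
      _ = b.repr (∑ j, fderiv ℝ Ω p (b j) • b j) j := by rw [h2]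
      _ = fderiv ℝ Ω p (b j) := by rw [b.repr_sum_self]
  have : (g p Gp) = ((fderiv ℝ Ω p : E →L[ℝ] ℝ) : E →ₗ[ℝ] ℝ) :=
    b.ext fun j => by simpa using hcoeff j
  calc g p Gp w = ((fderiv ℝ Ω p : E →L[ℝ] ℝ) : E →ₗ[ℝ] ℝ) w := by rw [this]
    _ = fderiv ℝ Ω p w := rfl

/-- Being totally umbilic is conformally invariant: if `S` is totally
umbilic with respect to `g`, then it is totally umbilic with respect to any conformally
rescaled metric `Ω·g` with `Ω` a smooth positive function (with `Γ'` the Levi-Civita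
connection of `Ω·g`). -/
theorem totallyUmbilic_conformally_invariant
    (g : E → E →ₗ[ℝ] E →ₗ[ℝ] ℝ) (Γ Γ' : E → E →ₗ[ℝ] E →ₗ[ℝ] E) (O S : Set E)
    (hO : IsOpen O) (hSO : S ⊆ O) (hLC : IsLeviCivitaOn g Γ O)
    (k : ℕ) (hsub : IsSubmanifold k S)
    (Ω : E → ℝ) (hΩs : ContDiffOn ℝ (⊤ : ℕ∞) Ω O) (hΩpos : ∀ p ∈ O, 0 < Ω p)
    (hLC' : IsLeviCivitaOn (fun p => Ω p • g p) Γ' O)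
    (hum : TotallyUmbilicOn g Γ O S) :
    TotallyUmbilicOn (fun p => Ω p • g p) Γ' O S := by
  classical
  obtain ⟨N, hNs, hN⟩ := hum
  obtain ⟨G, hGs, hG⟩ := exists_smooth_gradient g O hO hLC.metric Ω hΩs
  -- the difference tensor identity (Koszul computation)
  have hC : ∀ p ∈ O, ∀ v w z : E,
      Ω p * (g p (Γ' p z v) w + g p v (Γ' p z w))
        = Ω p * (g p (Γ p z v) w + g p v (Γ p z w)) + g p v w * fderiv ℝ Ω p z := by
    intro p hp v w z
    have hΩd : DifferentiableAt ℝ Ω p :=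
      ((hΩs p hp).contDiffAt (hO.mem_nhds hp)).differentiableAt (by simp)
    have hgd : DifferentiableAt ℝ (fun q => g q v w) p :=
      ((hLC.metric.smooth v w p hp).contDiffAt (hO.mem_nhds hp)).differentiableAt (by simp)
    have h1 : fderiv ℝ (fun q => Ω q * g q v w) p
        = Ω p • fderiv ℝ (fun q => g q v w) p + g p v w • fderiv ℝ Ω p :=
      fderiv_fun_mul hΩd hgd
    have h2 := hLC'.compatible p hp v w z
    simp only [LinearMap.smul_apply, smul_eq_mul] at h2
    rw [h1] at h2
    have h3 := hLC.compatible p hp v w z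
    simp only [ContinuousLinearMap.add_apply, ContinuousLinearMap.coe_smul',
      Pi.smul_apply, smul_eq_mul] at h2
    rw [h3] at h2
    linarith [h2]
  have h2Ω : ∀ p ∈ O, (2 : ℝ) * Ω p ≠ 0 := fun p hp => by
    have := hΩpos p hp; positivity
  have hD : ∀ p ∈ O, ∀ u v : E, Γ' p u v = Γ p u v + ((2 * Ω p)⁻¹ * fderiv ℝ Ω p u) • v
      + ((2 * Ω p)⁻¹ * fderiv ℝ Ω p v) • u - ((2 * Ω p)⁻¹ * g p u v) • G p := by
    intro p hp u v
    have hW : (2 * Ω p) • (Γ' p u v - Γ p u v) - (fderiv ℝ Ω p u) • v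
        - (fderiv ℝ Ω p v) • u + g p u v • G p = 0 := by
      apply hLC.metric.nondeg p hp
      intro w
      have e1 := hC p hp v w u
      have e2 := hC p hp u w v
      have e3 := hC p hp u v w
      have s1 := hLC.torsionFree p hp
      have s1' := hLC'.torsionFree p hp
      have s2 := hLC.metric.symm p hp
      have hGw := hG p hp w
      simp only [map_sub, map_add, map_smul, LinearMap.sub_apply, LinearMap.add_apply,
        LinearMap.smul_apply, smul_eq_mul]
      rw [s1' v u, s1 v u] at e2
      rw [s1' w u, s1 w u, s1' w v, s1 w v] at e3
      rw [s2 (Γ' p u w) v, s2 (Γ p u w) v] at e3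
      rw [hGw]
      linear_combination e1 + e2 - e3
    have h2 : (2 : ℝ) * Ω p ≠ 0 := h2Ω p hp
    have hΩp : Ω p ≠ 0 := ne_of_gt (hΩpos p hp)
    apply smul_right_injective E h2
    linear_combination (norm := (match_scalars <;> (field_simp; try ring))) hW
  refine ⟨fun p => (Ω p)⁻¹ • (N p - (2 * Ω p)⁻¹ • G p), ?_, ?_⟩
  · have hΩS : ContDiffOn ℝ (⊤ : ℕ∞) Ω S := hΩs.mono hSO
    have hne : ∀ p ∈ S, Ω p ≠ 0 := fun p hp => ne_of_gt (hΩpos p (hSO hp))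
    exact (hΩS.inv hne).smul (hNs.sub (((contDiffOn_const.mul hΩS).inv
      (fun p hp => h2Ω p (hSO hp))).smul (hGs.mono hSO)))
  · intro X Y hX hY p hp
    have hpO : p ∈ O := hSO hp
    have hΩ0 : Ω p ≠ 0 := ne_of_gt (hΩpos p hpO)
    have hkey : cov Γ' X Y p
          - ((Ω p • g p) (X p) (Y p)) • ((Ω p)⁻¹ • (N p - (2 * Ω p)⁻¹ • G p))
        = (cov Γ X Y p - g p (X p) (Y p) • N p)
          + ((2 * Ω p)⁻¹ * fderiv ℝ Ω p (X p)) • Y p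
          + ((2 * Ω p)⁻¹ * fderiv ℝ Ω p (Y p)) • X p := by
      simp only [cov, LinearMap.smul_apply, smul_eq_mul]
      rw [hD p hpO (X p) (Y p)]
      match_scalars <;> (field_simp; try ring)
    rw [show ((fun p => Ω p • g p) p (X p) (Y p)) = (Ω p • g p) (X p) (Y p) from rfl, hkey]
    exact Submodule.add_mem _ (Submodule.add_mem _ (hN X Y hX hY p hp)
      (Submodule.smul_mem _ _ (hY.2 p hp))) (Submodule.smul_mem _ _ (hX.2 p hp))
end

section
/- In Minkowski space (ℝⁿ with the constant Lorentzian metric g = (dx¹)² + … + (dx^{n−1})² − (dxⁿ)², n ≥ 3), the light cone with vertex p, i.e., the set { x ∈ ℝⁿ | g(x−p, x−p) = 0, x ≠ p }, is a lightlike hypersurface that is totally umbilic. -/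
open Set

variable {E : Type*} [NormedAddCommGroup E] [NormedSpace ℝ E] [FiniteDimensional ℝ E]

namespace LC

variable {m : ℕ}

/-- The Minkowski bilinear form on `Fin (m+1) → ℝ`, matching `hg` literally. -/
def Bq (m : ℕ) (v w : Fin (m+1) → ℝ) : ℝ :=
  ∑ i : Fin (m+1), (if (i : ℕ) + 1 = m + 1 then -(v i * w i) else v i * w i)

lemma Bq_eq (v w : Fin (m+1) → ℝ) :
    Bq m v w = (∑ i : Fin m, v i.castSucc * w i.castSucc) - v (Fin.last m) * w (Fin.last m) := by
  rw [Bq, Fin.sum_univ_castSucc]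
  have h1 : ∀ i : Fin m, ((i.castSucc : Fin (m+1)) : ℕ) + 1 ≠ m + 1 := by
    intro i; simpa using i.isLt.ne
  have h2 : ((Fin.last m : Fin (m+1)) : ℕ) + 1 = m + 1 := by simp
  rw [if_pos h2, Finset.sum_congr rfl fun i _ => if_neg (h1 i)]
  ring

lemma Bq_symm (v w : Fin (m+1) → ℝ) : Bq m v w = Bq m w v := by
  unfold Bq; exact Finset.sum_congr rfl fun i _ => by split_ifs <;> ring

lemma Bq_add_right (v w z : Fin (m+1) → ℝ) : Bq m v (w + z) = Bq m v w + Bq m v z := by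
  unfold Bq; rw [← Finset.sum_add_distrib]
  exact Finset.sum_congr rfl fun i _ => by simp only [Pi.add_apply]; split_ifs <;> ring

lemma Bq_smul_right (v w : Fin (m+1) → ℝ) (r : ℝ) : Bq m v (r • w) = r * Bq m v w := by
  unfold Bq; rw [Finset.mul_sum]
  exact Finset.sum_congr rfl fun i _ => by simp only [Pi.smul_apply, smul_eq_mul]; split_ifs <;> ring

lemma Bq_sub_right (v w z : Fin (m+1) → ℝ) : Bq m v (w - z) = Bq m v w - Bq m v z := by
  have := Bq_add_right v (w - z) z; simp at this; linarith

/-- `Bq v ·` as a linear functional. -/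
def bqL (m : ℕ) (v : Fin (m+1) → ℝ) : (Fin (m+1) → ℝ) →ₗ[ℝ] ℝ where
  toFun w := Bq m v w
  map_add' w z := Bq_add_right v w z
  map_smul' r w := by simpa using Bq_smul_right v w r

@[simp] lemma bqL_apply (v w : Fin (m+1) → ℝ)  : bqL m v w = Bq m v w := rfl

/-- Derivative of `Bq` along two curves. -/
lemma hasDerivAt_Bq {a b : ℝ → Fin (m+1) → ℝ} {a' b' : Fin (m+1) → ℝ} {t : ℝ}
    (ha : HasDerivAt a a' t) (hb : HasDerivAt b b' t) :
    HasDerivAt (fun s => Bq m (a s) (b s)) (Bq m a' (b t) + Bq m (a t) b') t := by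
  have key : ∀ i : Fin (m+1), HasDerivAt
      (fun s => if (i : ℕ) + 1 = m + 1 then -(a s i * b s i) else a s i * b s i)
      (if (i : ℕ) + 1 = m + 1 then -(a' i * b t i + a t i * b' i)
        else a' i * b t i + a t i * b' i) t := by
    intro i
    have hai : HasDerivAt (fun s => a s i) (a' i) t := hasDerivAt_pi.mp ha i
    have hbi : HasDerivAt (fun s => b s i) (b' i) t := hasDerivAt_pi.mp hb i
    have hmul := hai.mul hbi
    split_ifs
    · exact hmul.neg
    · exact hmul
  have hsum := HasDerivAt.fun_sum (u := Finset.univ) (fun i _ => key i)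
  have heq : (∑ i : Fin (m+1), (if (i : ℕ) + 1 = m + 1 then -(a' i * b t i + a t i * b' i)
      else a' i * b t i + a t i * b' i)) = Bq m a' (b t) + Bq m (a t) b' := by
    unfold Bq
    rw [← Finset.sum_add_distrib]
    exact Finset.sum_congr rfl fun i _ => by split_ifs <;> ring
  rw [← heq]
  exact hsum.congr_deriv rfl

def cone (m : ℕ) (p : Fin (m+1) → ℝ) : Set (Fin (m+1) → ℝ) :=
  {x | Bq m (x - p) (x - p) = 0 ∧ x ≠ p}

variable {p q : Fin (m+1) → ℝ}

lemma sum_sq_eq (hq : q ∈ cone m p) :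
    (∑ i : Fin m, ((q - p) i.castSucc)^2) = ((q - p) (Fin.last m))^2 := by
  have h := hq.1
  rw [Bq_eq] at h
  have : ∀ x : ℝ, x * x = x ^ 2 := fun x => (sq x).symm
  rw [Finset.sum_congr rfl fun i _ => this _] at h
  nlinarith [h]

lemma last_ne_zero (hq : q ∈ cone m p) : (q - p) (Fin.last m) ≠ 0 := by
  intro h0
  have hs := sum_sq_eq hq
  rw [h0] at hs
  have hz : ∀ i : Fin m, (q - p) i.castSucc = 0 := by
    intro i
    have hnn : ∀ j ∈ Finset.univ (α := Fin m), (0:ℝ) ≤ ((q - p) j.castSucc)^2 :=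
      fun j _ => sq_nonneg _
    have := Finset.sum_eq_zero_iff_of_nonneg hnn |>.mp (by rw [hs]; ring) i (Finset.mem_univ i)
    exact pow_eq_zero_iff (by norm_num) |>.mp this
  apply hq.2
  funext i
  have : (q - p) i = 0 := by
    induction i using Fin.lastCases with
    | last => exact h0
    | cast j => exact hz j
  simpa [sub_eq_zero] using this
-- NEW MATERIAL BELOW

lemma tangent_subset (hq : q ∈ cone m p) :
    TangentAt (cone m p) q ≤ LinearMap.ker (bqL m (q - p)) := by
  rw [TangentAt, Submodule.span_le]
  rintro v ⟨c, ε, hε, hcS, hc0, hsm, hd⟩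
  simp only [SetLike.mem_coe, LinearMap.mem_ker, bqL_apply]
  have h0 : (0:ℝ) ∈ Ioo (-ε) ε := ⟨by linarith, hε⟩
  have hdiff : DifferentiableAt ℝ c 0 :=
    ((hsm.differentiableOn (by simp)).differentiableAt (isOpen_Ioo.mem_nhds h0))
  have hcd : HasDerivAt c v 0 := hd ▸ hdiff.hasDerivAt
  have ha : HasDerivAt (fun t => c t - p) v 0 := hcd.sub_const p
  have hB : HasDerivAt (fun t => Bq m (c t - p) (c t - p))
      (Bq m v (c 0 - p) + Bq m (c 0 - p) v) 0 := hasDerivAt_Bq ha ha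
  have h0' : HasDerivAt (fun t => Bq m (c t - p) (c t - p)) 0 0 := by
    refine (hasDerivAt_const (0:ℝ) (0:ℝ)).congr_of_eventuallyEq ?_
    filter_upwards [isOpen_Ioo.mem_nhds h0] with t ht
    exact (hcS t ht).1
  have huniq := hB.unique h0'
  rw [hc0, Bq_symm v (q - p)] at huniq
  linarith

lemma tangent_mem (hq : q ∈ cone m p) {w : Fin (m+1) → ℝ}
    (hw : Bq m (q - p) w = 0) : w ∈ TangentAt (cone m p) q := by
  apply Submodule.subset_span
  set l := Fin.last m with hl
  have hPl : (q - p) l ≠ 0 := last_ne_zero hq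
  set σ : ℝ := if 0 < (q - p) l then 1 else -1 with hσ
  have hσabs : σ * |(q - p) l| = (q - p) l := by
    rcases lt_or_gt_of_ne hPl with h | h
    · rw [hσ, if_neg (by linarith), abs_of_neg h]; ring
    · rw [hσ, if_pos h, abs_of_pos h]; ring
  have hσ2 : σ * σ = 1 := by rw [hσ]; split_ifs <;> ring
  set D : ℝ → ℝ := fun t => ((q - p) l + t * w l)^2 + t^2 * Bq m w w with hD
  set s : ℝ → ℝ := fun t => -((q - p) l + t * w l) + σ * Real.sqrt (D t) with hs
  set e : Fin (m+1) → ℝ := Pi.single l 1 with he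
  set c : ℝ → (Fin (m+1) → ℝ) := fun t => q + t • w + s t • e with hc
  have hD0 : D 0 = ((q - p) l)^2 := by simp [hD]
  have hD0pos : 0 < D 0 := by rw [hD0]; positivity
  have hDcont : Continuous D := by unfold D; fun_prop
  have hA : IsOpen {t : ℝ | 0 < D t} := isOpen_lt continuous_const hDcont
  have h0A : (0:ℝ) ∈ {t : ℝ | 0 < D t} := hD0pos
  -- smoothness of c at points of A
  have hcsm : ∀ t ∈ {t : ℝ | 0 < D t}, ContDiffAt ℝ (⊤ : WithTop ℕ∞) c t := by
    intro t ht
    have hDsm : ContDiffAt ℝ (⊤ : WithTop ℕ∞) D t := by unfold D; fun_prop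
    have hsq : ContDiffAt ℝ (⊤ : WithTop ℕ∞) (fun t => Real.sqrt (D t)) t :=
      (Real.contDiffAt_sqrt (ne_of_gt ht)).comp t hDsm
    have hssm : ContDiffAt ℝ (⊤ : WithTop ℕ∞) s t := by
      unfold s
      exact ((contDiffAt_const.add (contDiffAt_id.mul contDiffAt_const)).neg).add
        (contDiffAt_const.mul hsq)
    unfold c
    exact (contDiffAt_const.add (contDiffAt_id.smul contDiffAt_const)).add
      (hssm.smul contDiffAt_const)
  -- c 0 = q
  have hs0 : s 0 = 0 := by
    simp only [hs, hD0]
    rw [zero_mul, add_zero, Real.sqrt_sq_eq_abs, hσabs]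
    ring
  have hc0 : c 0 = q := by simp [hc, hs0]
  -- membership in cone for t in A (and c t ≠ p handled separately)
  have hBzero : ∀ t ∈ {t : ℝ | 0 < D t}, Bq m (c t - p) (c t - p) = 0 := by
    intro t ht
    have hcomp1 : ∀ i : Fin m, (c t - p) i.castSucc
        = (q - p) i.castSucc + t * w i.castSucc := by
      intro i
      have h0 : e i.castSucc = 0 := by
        rw [he]; exact Pi.single_eq_of_ne (Fin.castSucc_lt_last i).ne 1
      simp [hc, h0]
      ring
    have hcomp2 : (c t - p) l = (q - p) l + t * w l + s t := by
      have h1 : e l = 1 := by rw [he]; exact Pi.single_eq_same l 1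
      simp [hc, h1]
      ring
    rw [Bq_eq]
    rw [Finset.sum_congr rfl fun i _ => by rw [hcomp1 i], hcomp2]
    have hexp : ∑ i : Fin m, ((q - p) i.castSucc + t * w i.castSucc) *
        ((q - p) i.castSucc + t * w i.castSucc)
        = (∑ i : Fin m, ((q - p) i.castSucc)^2)
          + (2*t) * (∑ i : Fin m, (q - p) i.castSucc * w i.castSucc)
          + t^2 * (∑ i : Fin m, w i.castSucc * w i.castSucc) := by
      rw [Finset.mul_sum, Finset.mul_sum, ← Finset.sum_add_distrib, ← Finset.sum_add_distrib]
      exact Finset.sum_congr rfl fun i _ => by ring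
    rw [hexp, sum_sq_eq hq]
    have hPW : (∑ i : Fin m, (q - p) i.castSucc * w i.castSucc) = (q - p) l * w l := by
      have := hw; rw [Bq_eq] at this; linarith
    have hWW : (∑ i : Fin m, w i.castSucc * w i.castSucc) = Bq m w w + w l * w l := by
      have := Bq_eq w w; linarith
    rw [hPW, hWW]
    have hsq : (s t + ((q - p) l + t * w l))^2 = D t := by
      have : s t + ((q - p) l + t * w l) = σ * Real.sqrt (D t) := by rw [hs]; ring
      rw [this, mul_pow, Real.sq_sqrt (le_of_lt ht)]
      calc σ^2 * D t = (σ * σ) * D t := by ring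
        _ = D t := by rw [hσ2]; ring
    have hDt : D t = ((q - p) l + t * w l)^2 + t^2 * Bq m w w := rfl
    nlinarith [hsq, hDt]
  -- derivative of c at 0 is w
  have hDd : HasDerivAt D (2 * ((q - p) l) * (w l)) 0 := by
    have h1 : HasDerivAt (fun t : ℝ => (q - p) l + t * w l) (w l) 0 :=
      (hasDerivAt_mul_const (w l)).const_add _
    have h2 : HasDerivAt (fun t : ℝ => ((q - p) l + t * w l)^2)
        (2 * ((q - p) l + 0 * w l)^1 * (w l)) 0 := h1.pow 2
    have h3 : HasDerivAt (fun t : ℝ => t^2 * Bq m w w) ((2 * 0^1) * Bq m w w) 0 :=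
      (hasDerivAt_pow 2 0).mul_const _
    have := h2.fun_add h3
    refine this.congr_deriv (Eq.symm ?_)
    ring
  have hsd : HasDerivAt s 0 0 := by
    have hsqrt : HasDerivAt (fun t => Real.sqrt (D t))
        (1 / (2 * Real.sqrt (D 0)) * (2 * ((q - p) l) * (w l))) 0 :=
      (Real.hasDerivAt_sqrt (ne_of_gt hD0pos)).comp 0 hDd
    have h1 : HasDerivAt (fun t : ℝ => -((q - p) l + t * w l)) (-(w l)) 0 :=
      ((hasDerivAt_mul_const (w l)).const_add _).neg
    have h2 := h1.fun_add (hsqrt.const_mul σ)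
    refine h2.congr_deriv (Eq.symm ?_)
    rw [hD0, Real.sqrt_sq_eq_abs]
    have hσa : σ * (q l - p l) = |q l - p l| := by
      have h1 := hσabs
      simp only [Pi.sub_apply] at h1
      conv_lhs => rw [← h1]
      rw [← mul_assoc, hσ2, one_mul]
    have hPl' : q l - p l ≠ 0 := by simpa [Pi.sub_apply, sub_eq_zero] using hPl
    have habs : |q l - p l| ≠ 0 := abs_ne_zero.mpr hPl'
    simp only [Pi.sub_apply]
    field_simp
    linear_combination (-w l) * hσa
  have hcd : HasDerivAt c w 0 := by
    have h1 : HasDerivAt (fun t : ℝ => t • w) ((1:ℝ) • w) 0 := (hasDerivAt_id 0).smul_const w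
    have h2 : HasDerivAt (fun t : ℝ => s t • e) ((0:ℝ) • e) 0 :=
      hsd.smul_const _
    have h3 := ((hasDerivAt_const 0 q).fun_add h1).fun_add h2
    simpa using h3
  -- pick ε
  have hnep : {x : Fin (m+1) → ℝ | x ≠ p} ∈ nhds q := by
    refine IsOpen.mem_nhds ?_ hq.2
    exact isOpen_compl_iff.mpr isClosed_singleton
  have hcont : ContinuousAt c 0 := (hcsm 0 h0A).continuousAt
  have hpre : c ⁻¹' {x | x ≠ p} ∈ nhds (0:ℝ) := hcont (hc0 ▸ hnep)
  have hAmem : {t : ℝ | 0 < D t} ∈ nhds (0:ℝ) := hA.mem_nhds h0A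
  obtain ⟨ε, hε, hball⟩ := Metric.mem_nhds_iff.mp (Filter.inter_mem hAmem hpre)
  have hIoo : Ioo (-ε) ε ⊆ {t : ℝ | 0 < D t} ∩ c ⁻¹' {x | x ≠ p} := by
    intro t ht
    apply hball
    rw [Real.ball_eq_Ioo]
    simpa using ht
  refine ⟨c, ε, hε, ?_, hc0, ?_, hcd.deriv⟩
  · intro t ht
    obtain ⟨h1, h2⟩ := hIoo ht
    exact ⟨hBzero t h1, h2⟩
  · intro t ht
    exact ((hcsm t (hIoo ht).1).contDiffWithinAt).of_le le_top


lemma key_deriv (hq : q ∈ cone m p) {Y : (Fin (m+1) → ℝ) → (Fin (m+1) → ℝ)}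
    (hYsm : ContDiffOn ℝ (⊤ : ℕ∞) Y Set.univ)
    (hYt : ∀ x ∈ cone m p, Y x ∈ TangentAt (cone m p) x) :
    ∀ v ∈ TangentAt (cone m p) q,
      Bq m v (Y q) + Bq m (q - p) (fderiv ℝ Y q v) = 0 := by
  set L : (Fin (m+1) → ℝ) →ₗ[ℝ] ℝ :=
    bqL m (Y q) + (bqL m (q - p)).comp ((fderiv ℝ Y q : (Fin (m+1) → ℝ) →L[ℝ] (Fin (m+1) → ℝ)) :
      (Fin (m+1) → ℝ) →ₗ[ℝ] (Fin (m+1) → ℝ)) with hL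
  suffices h : TangentAt (cone m p) q ≤ LinearMap.ker L by
    intro v hv
    have hv' := h hv
    rw [LinearMap.mem_ker, hL] at hv'
    simp only [LinearMap.add_apply, LinearMap.comp_apply, ContinuousLinearMap.coe_coe, bqL_apply] at hv'
    rw [Bq_symm v (Y q)]
    exact hv'
  rw [TangentAt, Submodule.span_le]
  rintro v ⟨c, ε, hε, hcS, hc0, hsm, hd⟩
  have h0 : (0:ℝ) ∈ Ioo (-ε) ε := ⟨by linarith, hε⟩
  have hdiff : DifferentiableAt ℝ c 0 :=
    ((hsm.differentiableOn (by simp)).differentiableAt (isOpen_Ioo.mem_nhds h0))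
  have hcd : HasDerivAt c v 0 := hd ▸ hdiff.hasDerivAt
  have ha : HasDerivAt (fun t => c t - p) v 0 := hcd.sub_const p
  have hYdiff : DifferentiableAt ℝ Y (c 0) := by
    rw [hc0]
    exact ((contDiffOn_univ.mp hYsm).differentiable (by simp)) q
  have hb : HasDerivAt (fun t => Y (c t)) (fderiv ℝ Y (c 0) v) 0 :=
    hYdiff.hasFDerivAt.comp_hasDerivAt 0 hcd
  have hB := hasDerivAt_Bq ha hb
  have h0' : HasDerivAt (fun t => Bq m (c t - p) (Y (c t))) 0 0 := by
    refine (hasDerivAt_const (0:ℝ) (0:ℝ)).congr_of_eventuallyEq ?_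
    filter_upwards [isOpen_Ioo.mem_nhds h0] with t ht
    have hct : c t ∈ cone m p := hcS t ht
    have := (tangent_subset hct) (hYt (c t) hct)
    simpa using this
  have huniq := hB.unique h0'
  rw [hc0] at huniq
  simp only [SetLike.mem_coe, LinearMap.mem_ker, hL, LinearMap.add_apply,
    LinearMap.comp_apply, ContinuousLinearMap.coe_coe, bqL_apply]
  rw [Bq_symm (Y q) v]
  linarith

lemma Bq_single (v : Fin (m+1) → ℝ) :
    Bq m v (Pi.single (Fin.last m) 1) = -(v (Fin.last m)) := by
  rw [Bq_eq]
  have h1 : ∀ i : Fin m, (Pi.single (Fin.last m) 1 : Fin (m+1) → ℝ) i.castSucc = 0 :=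
    fun i => Pi.single_eq_of_ne (Fin.castSucc_lt_last i).ne 1
  have h2 : (Pi.single (Fin.last m) 1 : Fin (m+1) → ℝ) (Fin.last m) = 1 := Pi.single_eq_same _ 1
  rw [h2, Finset.sum_congr rfl fun i _ => by rw [h1 i, mul_zero]]
  simp


lemma cone_submanifoldPt (hq : q ∈ cone m p) : IsSubmanifoldPt m (cone m p) q := by
  set l := Fin.last m with hl
  have hPl : (q - p) l ≠ 0 := last_ne_zero hq
  set σ : ℝ := if 0 < (q - p) l then 1 else -1 with hσ
  have hσabs : σ * |(q - p) l| = (q - p) l := by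
    rcases lt_or_gt_of_ne hPl with h | h
    · rw [hσ, if_neg (by linarith), abs_of_neg h]; ring
    · rw [hσ, if_pos h, abs_of_pos h]; ring
  have hσ2 : σ * σ = 1 := by rw [hσ]; split_ifs <;> ring
  have hσa : σ * ((q - p) l) = |(q - p) l| := by
    conv_lhs => rw [← hσabs]
    rw [← mul_assoc, hσ2, one_mul]
  set R : (Fin m → ℝ) → ℝ := fun u => ∑ j : Fin m, (q j.castSucc + u j - p j.castSucc)^2
    with hR
  have hRsm : ContDiff ℝ (⊤ : WithTop ℕ∞) R := by
    apply ContDiff.sum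
    intro j _
    exact (((contDiff_const.add (contDiff_apply ℝ ℝ j)).sub contDiff_const).pow 2)
  set φ : (Fin m → ℝ) → (Fin (m+1) → ℝ) := fun u =>
    Fin.snoc (fun j => q j.castSucc + u j) (p l + σ * Real.sqrt (R u)) with hφ
  have hφc : ∀ u (j : Fin m), φ u j.castSucc = q j.castSucc + u j := by
    intro u j; rw [hφ]; exact Fin.snoc_castSucc _ _ j
  have hφl : ∀ u, φ u l = p l + σ * Real.sqrt (R u) := by
    intro u; rw [hφ, hl]; exact Fin.snoc_last _ _
  set U : Set (Fin m → ℝ) := {u | 0 < R u} with hU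
  have hUopen : IsOpen U := isOpen_lt continuous_const hRsm.continuous
  have hR0 : R 0 = ((q - p) l)^2 := by
    simp only [hR]
    have : ∀ j : Fin m, (q j.castSucc + (0 : Fin m → ℝ) j - p j.castSucc)^2
        = ((q - p) j.castSucc)^2 := by
      intro j; simp [Pi.sub_apply]
    rw [Finset.sum_congr rfl fun j _ => this j]
    exact sum_sq_eq hq
  have h0U : (0 : Fin m → ℝ) ∈ U := by
    rw [hU]; show 0 < R 0; rw [hR0]; positivity
  have hφ0 : φ 0 = q := by
    funext i
    induction i using Fin.lastCases with
    | last =>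
      rw [← hl, hφl, hR0, Real.sqrt_sq_eq_abs]
      have h2 : σ * |q l - p l| = q l - p l := by
        have h3 := hσabs; simp only [Pi.sub_apply] at h3; exact h3
      have h4 : |-p l + q l| = |q l - p l| := by rw [neg_add_eq_sub]
      simp only [Pi.sub_apply]
      linarith [h2]
    | cast j => rw [hφc]; simp
  have hφsm : ∀ u ∈ U, ContDiffAt ℝ (⊤ : WithTop ℕ∞) φ u := by
    intro u hu
    rw [contDiffAt_pi]
    intro i
    induction i using Fin.lastCases with
    | last =>
      have : (fun u => φ u (Fin.last m)) = fun u => p l + σ * Real.sqrt (R u) := by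
        funext u; rw [← hl, hφl]
      rw [this]
      exact contDiffAt_const.add (contDiffAt_const.mul
        ((Real.contDiffAt_sqrt (ne_of_gt hu)).comp u hRsm.contDiffAt))
    | cast j =>
      have : (fun u => φ u j.castSucc) = fun u => q j.castSucc + u j := by
        funext u; rw [hφc]
      rw [this]
      exact contDiffAt_const.add (contDiff_apply ℝ ℝ j).contDiffAt
  have hφdiff : ∀ u ∈ U, DifferentiableAt ℝ φ u :=
    fun u hu => (hφsm u hu).differentiableAt (by simp)
  -- injectivity of the differential
  have hinj : ∀ u ∈ U, Function.Injective (fderiv ℝ φ u) := by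
    intro u hu
    have hfd := (hφdiff u hu).hasFDerivAt
    intro v v' hvv
    have hcomp : ∀ j : Fin m, v j = v' j := by
      intro j
      have hproj := (ContinuousLinearMap.proj (R := ℝ) (φ := fun _ : Fin (m+1) => ℝ)
        j.castSucc).hasFDerivAt.comp u hfd
      have heq : (fun u => φ u j.castSucc) = fun u => q j.castSucc + u j := by
        funext u; rw [hφc]
      have hproj' : HasFDerivAt (fun u => φ u j.castSucc)
          ((ContinuousLinearMap.proj j.castSucc).comp (fderiv ℝ φ u)) u := hproj
      rw [heq] at hproj'
      have halt : HasFDerivAt (fun u : Fin m → ℝ => q j.castSucc + u j)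
          (ContinuousLinearMap.proj (R := ℝ) (φ := fun _ : Fin m => ℝ) j) u := by
        exact ((ContinuousLinearMap.proj (R := ℝ) (φ := fun _ : Fin m => ℝ) j).hasFDerivAt
          (x := u)).const_add (q j.castSucc)
      have huni := hproj'.unique halt
      have h1 : (fderiv ℝ φ u v) j.castSucc = v j := by
        have := congrArg (fun (T : (Fin m → ℝ) →L[ℝ] ℝ) => T v) huni
        simpa using this
      have h2 : (fderiv ℝ φ u v') j.castSucc = v' j := by
        have := congrArg (fun (T : (Fin m → ℝ) →L[ℝ] ℝ) => T v') huni
        simpa using this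
      rw [← h1, ← h2, hvv]
    funext j; exact hcomp j
  have hInjOn : Set.InjOn φ U := by
    intro u _ u' _ huu
    funext j
    have := congrFun huu j.castSucc
    rw [hφc, hφc] at this
    linarith [this]
  set V : Set (Fin (m+1) → ℝ) :=
    {x | (0 < ∑ j : Fin m, (x j.castSucc - p j.castSucc)^2) ∧ 0 < σ * (x l - p l)} with hV
  have hVopen : IsOpen V := by
    rw [hV, Set.setOf_and]
    apply IsOpen.inter
    · apply isOpen_lt continuous_const
      exact continuous_finset_sum _ fun j _ =>
        (((continuous_apply j.castSucc).sub continuous_const).pow 2)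
    · exact isOpen_lt continuous_const (continuous_const.mul
        ((continuous_apply l).sub continuous_const))
  have hqV : q ∈ V := by
    constructor
    · have : ∑ j : Fin m, (q j.castSucc - p j.castSucc)^2 = ((q - p) l)^2 := by
        rw [← sum_sq_eq hq]; exact Finset.sum_congr rfl fun j _ => by rw [Pi.sub_apply]
      rw [this]; positivity
    · show 0 < σ * (q l - p l)
      have : q l - p l = (q - p) l := rfl
      rw [this, hσa]
      exact abs_pos.mpr hPl
  refine ⟨φ, U, V, hUopen, h0U, hφ0, fun u hu => ((hφsm u hu).contDiffWithinAt).of_le le_top, hinj, hInjOn,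
    hVopen, hqV, ?_⟩
  apply Set.Subset.antisymm
  · rintro x ⟨u, hu, rfl⟩
    have hRu : 0 < R u := hu
    have hsum : ∑ j : Fin m, (φ u j.castSucc - p j.castSucc)^2 = R u := by
      simp only [hR]; exact Finset.sum_congr rfl fun j _ => by rw [hφc]
    have hlstval : φ u l - p l = σ * Real.sqrt (R u) := by rw [hφl]; ring
    have hsqrtpos : 0 < Real.sqrt (R u) := Real.sqrt_pos.mpr hRu
    have hlast2 : (φ u l - p l)^2 = R u := by
      rw [hlstval, mul_pow, Real.sq_sqrt hRu.le]
      calc σ^2 * R u = (σ * σ) * R u := by ring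
        _ = R u := by rw [hσ2, one_mul]
    constructor
    constructor
    · -- Bq (x-p) (x-p) = 0
      rw [Bq_eq]
      have hc : ∀ j : Fin m, (φ u - p) j.castSucc * (φ u - p) j.castSucc
          = (φ u j.castSucc - p j.castSucc)^2 := fun j => by rw [Pi.sub_apply]; ring
      rw [Finset.sum_congr rfl fun j _ => hc j, hsum]
      have : (φ u - p) l * (φ u - p) l = (φ u l - p l)^2 := by rw [Pi.sub_apply]; ring
      rw [this, hlast2]
      ring
    · -- φ u ≠ p
      intro hfp
      have : φ u l - p l = 0 := by rw [hfp]; ring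
      rw [hlstval] at this
      rcases mul_eq_zero.mp this with h | h
      · rw [hσ] at h; revert h; split_ifs <;> norm_num
      · exact absurd h (ne_of_gt hsqrtpos)
    · -- φ u ∈ V
      constructor
      · rw [hsum]; exact hRu
      · show 0 < σ * (φ u l - p l)
        rw [hlstval, ← mul_assoc, hσ2, one_mul]
        exact hsqrtpos
  · rintro x ⟨⟨hx0, hxne⟩, hx1, hx2⟩
    refine ⟨fun j => x j.castSucc - q j.castSucc, ?_, ?_⟩
    · show 0 < R _
      simp only [hR]
      have : ∀ j : Fin m, (q j.castSucc + (x j.castSucc - q j.castSucc) - p j.castSucc)^2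
          = (x j.castSucc - p j.castSucc)^2 := fun j => by ring_nf
      rw [Finset.sum_congr rfl fun j _ => this j]
      exact hx1
    · funext i
      induction i using Fin.lastCases with
      | last =>
        rw [← hl, hφl]
        have hRx : R (fun j => x j.castSucc - q j.castSucc)
            = ∑ j : Fin m, (x j.castSucc - p j.castSucc)^2 := by
          simp only [hR]
          exact Finset.sum_congr rfl fun j _ => by ring_nf
        have hcone : ∑ j : Fin m, (x j.castSucc - p j.castSucc)^2 = (x l - p l)^2 := by
          have h := hx0
          rw [Bq_eq] at h
          have hc : ∀ j : Fin m, (x - p) j.castSucc * (x - p) j.castSucc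
              = (x j.castSucc - p j.castSucc)^2 := fun j => by rw [Pi.sub_apply]; ring
          rw [Finset.sum_congr rfl fun j _ => hc j] at h
          have hcl : (x - p) l * (x - p) l = (x l - p l)^2 := by rw [Pi.sub_apply]; ring
          rw [hcl] at h
          linarith
        rw [hRx, hcone, Real.sqrt_sq_eq_abs]
        have habs : σ * |x l - p l| = x l - p l := by
          rcases abs_cases (x l - p l) with ⟨ha, hb⟩ | ⟨ha, hb⟩
          · rw [ha]
            nlinarith [hx2, hσ2]
          · rw [ha]
            nlinarith [hx2, hσ2]
        rw [habs]; ring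
      | cast j =>
        rw [hφc]; ring

lemma cone_submanifold : IsSubmanifold m (cone m p) :=
  fun q hq => cone_submanifoldPt hq

end LC

/-- In `n`-dimensional Minkowski space (`n ≥ 3`, flat connection
`Γ = 0`, metric `g(v,w) = v¹w¹ + … + v^{n-1}w^{n-1} − vⁿwⁿ`), the light cone with
vertex `p`, i.e. `{x | g(x−p, x−p) = 0, x ≠ p}`, is a lightlike hypersurface that is
totally umbilic. -/
theorem minkowski_light_cone_totallyUmbilic (n : ℕ) (hn : 3 ≤ n)
    (g : (Fin n → ℝ) → (Fin n → ℝ) →ₗ[ℝ] (Fin n → ℝ) →ₗ[ℝ] ℝ)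
    (hg : ∀ (p : Fin n → ℝ) (v w : Fin n → ℝ), g p v w =
      ∑ i : Fin n, (if (i : ℕ) + 1 = n then -(v i * w i) else v i * w i))
    (Γ : (Fin n → ℝ) → (Fin n → ℝ) →ₗ[ℝ] (Fin n → ℝ) →ₗ[ℝ] (Fin n → ℝ))
    (hΓ : ∀ p, Γ p = 0)
    (p : Fin n → ℝ) :
    IsSubmanifold (n - 1) {x : Fin n → ℝ | g x (x - p) (x - p) = 0 ∧ x ≠ p} ∧
    InducedDegenerate g {x : Fin n → ℝ | g x (x - p) (x - p) = 0 ∧ x ≠ p} ∧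
    TotallyUmbilicOn g Γ Set.univ {x : Fin n → ℝ | g x (x - p) (x - p) = 0 ∧ x ≠ p} := by
  obtain ⟨m, rfl⟩ : ∃ m, n = m + 1 := ⟨n - 1, by omega⟩
  have hgB : ∀ (x v w : Fin (m+1) → ℝ), g x v w = LC.Bq m v w := fun x v w => hg x v w
  have hSeq : {x : Fin (m+1) → ℝ | g x (x - p) (x - p) = 0 ∧ x ≠ p} = LC.cone m p := by
    ext x
    simp only [Set.mem_setOf_eq, LC.cone, hgB]
  rw [hSeq]
  refine ⟨?_, ?_, ?_⟩
  · show IsSubmanifold m (LC.cone m p)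
    exact LC.cone_submanifold
  · intro q hq
    refine ⟨q - p, LC.tangent_mem hq hq.1, sub_ne_zero.mpr hq.2, ?_⟩
    intro w hw
    rw [hgB]
    simpa using LC.tangent_subset hq hw
  · refine ⟨fun x => (x (Fin.last m) - p (Fin.last m))⁻¹ •
      (Pi.single (Fin.last m) 1 : Fin (m+1) → ℝ), ?_, ?_⟩
    · intro q hq
      have hPl : q (Fin.last m) - p (Fin.last m) ≠ 0 := by
        have h := LC.last_ne_zero hq
        simpa [Pi.sub_apply, sub_eq_zero] using h
      have hct : ContDiffAt ℝ (⊤ : ℕ∞) (fun x : Fin (m+1) → ℝ =>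
          (x (Fin.last m) - p (Fin.last m))⁻¹ •
          (Pi.single (Fin.last m) 1 : Fin (m+1) → ℝ)) q := by
        exact ContDiffAt.smul (((contDiff_apply ℝ ℝ (Fin.last m)).contDiffAt.sub contDiffAt_const).inv hPl) contDiffAt_const
      exact hct.contDiffWithinAt
    · intro X Y hX hY q hq
      apply LC.tangent_mem hq
      have hXq := hX.2 q hq
      have hkey := LC.key_deriv hq hY.1 hY.2 (X q) hXq
      rw [LC.Bq_sub_right, LC.Bq_smul_right]
      have h1 : LC.Bq m (q - p) (cov Γ X Y q) = - LC.Bq m (X q) (Y q) := by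
        have hcov : cov Γ X Y q = fderiv ℝ Y q (X q) := by
          simp only [cov, hΓ q]
          simp
        rw [hcov]
        linarith [hkey]
      have h2 : LC.Bq m (q - p) ((q (Fin.last m) - p (Fin.last m))⁻¹ •
          (Pi.single (Fin.last m) 1 : Fin (m+1) → ℝ)) = -1 := by
        rw [LC.Bq_smul_right, LC.Bq_single]
        have hv : (q - p) (Fin.last m) = q (Fin.last m) - p (Fin.last m) := rfl
        have hPl : q (Fin.last m) - p (Fin.last m) ≠ 0 := by
          have h := LC.last_ne_zero hq
          simpa [Pi.sub_apply, sub_eq_zero] using h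
        rw [hv]
        field_simp
      rw [h1, h2, hgB]
      ring
end
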